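/- arXiv:2105.00262 — 5 statements merged into one kernel-verified Lean document; each statement's English description precedes it below -/
import Mathlib

section
/- Let E be a real inner product space and H : E →L[ℝ] E a continuous linear operator that is symmetric (⟨H x, y⟩ = ⟨x, H y⟩ for all x, y), positive (0 ≤ ⟨H x, x⟩ for all x), and satisfies ‖H‖ ≤ 1. Then for every η with 0 ≤ η ≤ 2, the operator id − η • H has operator norm at most 1. -/
open RealInnerProductSpace

private lemma cs_aux {E : Type*} [NormedAddCommGroup E] [InnerProductSpace ℝ E]
    (H : E →L[ℝ] E) (hsym : ∀ x y : E, ⟪H x, y⟫ = ⟪x, H y⟫)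
    (hpos : ∀ x : E, 0 ≤ ⟪H x, x⟫) (x y : E) :
    ⟪H x, y⟫ ^ 2 ≤ ⟪H x, x⟫ * ⟪H y, y⟫ := by
  have key : ∀ t : ℝ, 0 ≤ ⟪H y, y⟫ * (t * t) + (2 * ⟪H x, y⟫) * t + ⟪H x, x⟫ := by
    intro t
    have h := hpos (x + t • y)
    have hxy : ⟪H y, x⟫ = ⟪H x, y⟫ := by
      rw [hsym y x, real_inner_comm]
    simp only [map_add, map_smul, inner_add_left, inner_add_right,
      real_inner_smul_left, real_inner_smul_right] at h
    rw [hxy] at h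
    nlinarith [h]
  have hd := discrim_le_zero key
  rw [discrim] at hd
  nlinarith [hd]

private lemma normsq_aux {E : Type*} [NormedAddCommGroup E] [InnerProductSpace ℝ E]
    (H : E →L[ℝ] E) (hsym : ∀ x y : E, ⟪H x, y⟫ = ⟪x, H y⟫)
    (hpos : ∀ x : E, 0 ≤ ⟪H x, x⟫) (hnorm : ‖H‖ ≤ 1) (x : E) :
    ‖H x‖ ^ 2 ≤ ⟪H x, x⟫ := by
  rcases eq_or_ne (H x) 0 with h0 | h0
  · simp [h0, hpos x]
  · have h1 : ⟪H x, H x⟫ ^ 2 ≤ ⟪H x, x⟫ * ⟪H (H x), H x⟫ := cs_aux H hsym hpos x (H x)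
    have h2 : ⟪H (H x), H x⟫ ≤ ‖H x‖ ^ 2 := by
      calc ⟪H (H x), H x⟫ ≤ ‖H (H x)‖ * ‖H x‖ := real_inner_le_norm _ _
        _ ≤ (‖H‖ * ‖H x‖) * ‖H x‖ := by
            gcongr; exact H.le_opNorm _
        _ ≤ (1 * ‖H x‖) * ‖H x‖ := by
            gcongr
        _ = ‖H x‖ ^ 2 := by ring
    have h3 : ⟪H x, H x⟫ = ‖H x‖ ^ 2 := real_inner_self_eq_norm_sq _
    have hne : (0:ℝ) < ‖H x‖ ^ 2 := pow_pos (norm_pos_iff.mpr h0) 2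
    have h4 : (‖H x‖ ^ 2) ^ 2 ≤ ⟪H x, x⟫ * ‖H x‖ ^ 2 := by
      calc (‖H x‖ ^ 2) ^ 2 = ⟪H x, H x⟫ ^ 2 := by rw [h3]
        _ ≤ ⟪H x, x⟫ * ⟪H (H x), H x⟫ := h1
        _ ≤ ⟪H x, x⟫ * ‖H x‖ ^ 2 := by
            have := hpos x
            nlinarith [h2]
    nlinarith [h4, hne]

/-- If `H` is a symmetric positive continuous linear operator on a real inner
product space with `‖H‖ ≤ 1`, then for `0 ≤ η ≤ 2` the operator `id - η • H`
has operator norm at most `1`. -/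
theorem opNorm_id_sub_smul_le_one {E : Type*} [NormedAddCommGroup E] [InnerProductSpace ℝ E]
    (H : E →L[ℝ] E) (hsym : ∀ x y : E, ⟪H x, y⟫ = ⟪x, H y⟫)
    (hpos : ∀ x : E, 0 ≤ ⟪H x, x⟫) (hnorm : ‖H‖ ≤ 1)
    (η : ℝ) (hη0 : 0 ≤ η) (hη2 : η ≤ 2) :
    ‖ContinuousLinearMap.id ℝ E - η • H‖ ≤ 1 := by
  refine ContinuousLinearMap.opNorm_le_bound _ zero_le_one (fun x => ?_)
  rw [one_mul]
  have happ : (ContinuousLinearMap.id ℝ E - η • H) x = x - η • H x := by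
    simp
  rw [happ]
  have hsq : ‖x - η • H x‖ ^ 2 ≤ ‖x‖ ^ 2 := by
    have hexp : ‖x - η • H x‖ ^ 2 = ‖x‖ ^ 2 - 2 * η * ⟪H x, x⟫ + η ^ 2 * ‖H x‖ ^ 2 := by
      rw [← real_inner_self_eq_norm_sq, ← real_inner_self_eq_norm_sq,
        ← real_inner_self_eq_norm_sq]
      simp only [inner_sub_sub_self, real_inner_smul_left, real_inner_smul_right]
      have : ⟪x, H x⟫ = ⟪H x, x⟫ := real_inner_comm _ _
      ring_nf
      nlinarith [this]
    rw [hexp]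
    have hb := normsq_aux H hsym hpos hnorm x
    have h5 : η ^ 2 * ‖H x‖ ^ 2 ≤ 2 * η * ⟪H x, x⟫ := by
      nlinarith [mul_nonneg (sq_nonneg η) (sub_nonneg.mpr hb),
        mul_nonneg (mul_nonneg hη0 (sub_nonneg.mpr hη2)) (hpos x)]
    linarith
  nlinarith [hsq, norm_nonneg (x - η • H x), norm_nonneg x,
    sq_nonneg (‖x - η • H x‖ - ‖x‖), sq_nonneg (‖x - η • H x‖ + ‖x‖)]
end

section
/- Let E be a real Hilbert space with a Hilbert (orthonormal) basis (φ_i)_{i ∈ ℕ}, let λ : ℕ → ℝ be nonincreasing with λ i ≥ 0 for all i, and let η : ℕ → ℝ satisfy 0 ≤ η s and η s · λ 0 ≤ 1 for all s. For t ∈ ℕ and i ∈ ℕ set ρ_i(t) := Π_{s=0}^{t} (1 − η s · λ i). Then for every Δ₀ ∈ E, every t ∈ ℕ and every r ∈ ℕ, ‖ Σ'_{i ∈ ℕ} ρ_i(t) · ⟨Δ₀, φ_i⟩ • φ_i ‖ ≤ ρ_r(t) · ‖Δ₀‖ + √( Σ'_{i > r} ⟨Δ₀, φ_i⟩² ). 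-/
open RealInnerProductSpace

/-! The vector is the synthesis, in the basis `φ`, of the `ℓ²` sequence `ρ_i(t) ⟪Δ₀, φ_i⟫`, so its
squared norm is `∑ ρ_i(t)² ⟪Δ₀, φ_i⟫²`. Each factor `1 - η s λ_i` lies in `[0, 1]` and increases
with `i`, so `0 ≤ ρ_i(t) ≤ ρ_r(t)` for `i ≤ r` and `ρ_i(t) ≤ 1` for all `i`. Splitting the sum at
`r` bounds it by `ρ_r(t)² ‖Δ₀‖² + ∑_{i > r} ⟪Δ₀, φ_i⟫²`, and `√(a² + b) ≤ a + √b` concludes. -/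

theorem lp.hasSum_norm_sq {ι : Type*} {E : ι → Type*} [∀ i, NormedAddCommGroup (E i)]
    (f : lp E 2) : HasSum (fun i => ‖f i‖ ^ 2) (‖f‖ ^ 2) := by
  simpa using lp.hasSum_norm (p := 2) (by norm_num) f

namespace HilbertBasis

variable {ι 𝕜 E : Type*} [RCLike 𝕜] [NormedAddCommGroup E] [InnerProductSpace 𝕜 E]

theorem hasSum_norm_inner_sq (b : HilbertBasis ι 𝕜 E) (x : E) :
    HasSum (fun i => ‖inner 𝕜 (b i) x‖ ^ 2) (‖x‖ ^ 2) := by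
  simpa only [b.repr_apply_apply, LinearIsometryEquiv.norm_map] using lp.hasSum_norm_sq (b.repr x)

theorem norm_tsum_smul_sq (b : HilbertBasis ι 𝕜 E) {a : ι → 𝕜}
    (ha : Summable fun i => ‖a i‖ ^ 2) : ‖∑' i, a i • b i‖ ^ 2 = ∑' i, ‖a i‖ ^ 2 := by
  let f : lp (fun _ : ι => 𝕜) 2 := ⟨a, memℓp_gen (by simpa using ha)⟩
  rw [(b.hasSum_repr_symm f).tsum_eq, LinearIsometryEquiv.norm_map, (lp.hasSum_norm_sq f).tsum_eq]

end HilbertBasis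

theorem tsum_mul_le_mul_tsum_add_tsum_subtype {ι : Type*} {f w : ι → ℝ} (hf0 : ∀ i, 0 ≤ f i)
    (hf : Summable f) (hw0 : ∀ i, 0 ≤ w i) (hw1 : ∀ i, w i ≤ 1) (s : Set ι) {K : ℝ}
    (hK0 : 0 ≤ K) (hK : ∀ i ∉ s, w i ≤ K) :
    ∑' i, w i * f i ≤ K * ∑' i, f i + ∑' i : s, f i := by
  have hwf : Summable fun i => w i * f i :=
    hf.of_nonneg_of_le (fun i => mul_nonneg (hw0 i) (hf0 i))
      (fun i => mul_le_of_le_one_left (hf0 i) (hw1 i))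
  have hin : ∑' i : s, w i * f i ≤ ∑' i : s, f i :=
    (hwf.subtype s).tsum_le_tsum (fun i => mul_le_of_le_one_left (hf0 i) (hw1 i)) (hf.subtype s)
  have hout : ∑' i : ↥sᶜ, w i * f i ≤ K * ∑' i, f i :=
    calc ∑' i : ↥sᶜ, w i * f i ≤ ∑' i : ↥sᶜ, K * f i :=
          (hwf.subtype _).tsum_le_tsum
            (fun i => mul_le_mul_of_nonneg_right (hK i i.2) (hf0 i)) ((hf.subtype _).mul_left K)
      _ = K * ∑' i : ↥sᶜ, f i := tsum_mul_left
      _ ≤ K * ∑' i, f i := mul_le_mul_of_nonneg_left (hf.tsum_subtype_le f _ hf0) hK0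
  rw [← hwf.tsum_subtype_add_tsum_subtype_compl s]
  linarith

theorem Real.sqrt_sq_add_le {a b : ℝ} (ha : 0 ≤ a) (hb : 0 ≤ b) : √(a ^ 2 + b) ≤ a + √b :=
  (Real.sqrt_le_left (by positivity)).2 <| by nlinarith [Real.sq_sqrt hb, Real.sqrt_nonneg b]

section StepFactors

variable {lam η : ℕ → ℝ}

theorem one_sub_mul_nonneg_of_antitone (hmono : Antitone lam) {s : ℕ} (hη0 : 0 ≤ η s)
    (hη1 : η s * lam 0 ≤ 1) (i : ℕ) : 0 ≤ 1 - η s * lam i := by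
  nlinarith [hmono (Nat.zero_le i)]

variable (hmono : Antitone lam) (hη0 : ∀ s, 0 ≤ η s) (hη1 : ∀ s, η s * lam 0 ≤ 1) (S : Finset ℕ)
include hmono hη0 hη1

theorem prod_one_sub_mul_nonneg (i : ℕ) : 0 ≤ ∏ s ∈ S, (1 - η s * lam i) :=
  Finset.prod_nonneg fun s _ => one_sub_mul_nonneg_of_antitone hmono (hη0 s) (hη1 s) i

theorem prod_one_sub_mul_le_one (hnonneg : ∀ i, 0 ≤ lam i) (i : ℕ) :
    ∏ s ∈ S, (1 - η s * lam i) ≤ 1 :=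
  Finset.prod_le_one (fun s _ => one_sub_mul_nonneg_of_antitone hmono (hη0 s) (hη1 s) i)
    fun s _ => sub_le_self _ (mul_nonneg (hη0 s) (hnonneg i))

theorem monotone_prod_one_sub_mul : Monotone fun i => ∏ s ∈ S, (1 - η s * lam i) :=
  fun i j hij => Finset.prod_le_prod
    (fun s _ => one_sub_mul_nonneg_of_antitone hmono (hη0 s) (hη1 s) i)
    fun s _ => by nlinarith [hmono hij, hη0 s]

end StepFactors

theorem contraction_eigen_bound_general {E : Type*} [NormedAddCommGroup E] [InnerProductSpace ℝ E]
    (φ : HilbertBasis ℕ ℝ E)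
    (lam : ℕ → ℝ) (hmono : Antitone lam) (hnonneg : ∀ i, 0 ≤ lam i)
    (η : ℕ → ℝ) (hη0 : ∀ s, 0 ≤ η s) (hη1 : ∀ s, η s * lam 0 ≤ 1)
    (Δ₀ : E) (t r : ℕ) :
    ‖∑' i : ℕ, (∏ s ∈ Finset.range (t + 1), (1 - η s * lam i)) • (⟪Δ₀, φ i⟫ • φ i)‖ ≤
      (∏ s ∈ Finset.range (t + 1), (1 - η s * lam r)) * ‖Δ₀‖ +
        Real.sqrt (∑' i : {i : ℕ // r < i}, ⟪Δ₀, φ (i : ℕ)⟫ ^ 2) := by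
  set ρ : ℕ → ℝ := fun i => ∏ s ∈ Finset.range (t + 1), (1 - η s * lam i)
  set c : ℕ → ℝ := fun i => ⟪Δ₀, φ i⟫
  have hρ0 := prod_one_sub_mul_nonneg hmono hη0 hη1 (Finset.range (t + 1))
  have hρ2 : ∀ i, ρ i ^ 2 ≤ 1 := fun i =>
    pow_le_one₀ (hρ0 i) (prod_one_sub_mul_le_one hmono hη0 hη1 _ hnonneg i)
  have hc : HasSum (fun i => c i ^ 2) (‖Δ₀‖ ^ 2) := by
    simpa [real_inner_comm] using φ.hasSum_norm_inner_sq Δ₀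
  have hsplit :
      ∑' i, ρ i ^ 2 * c i ^ 2 ≤ ρ r ^ 2 * ‖Δ₀‖ ^ 2 + ∑' i : {i // r < i}, c i ^ 2 := by
    rw [← hc.tsum_eq]
    refine tsum_mul_le_mul_tsum_add_tsum_subtype (fun i => sq_nonneg _) hc.summable
      (fun i => sq_nonneg _) hρ2 {i | r < i} (sq_nonneg _) fun i hi => ?_
    exact pow_le_pow_left₀ (hρ0 i) (monotone_prod_one_sub_mul hmono hη0 hη1 _ (not_lt.1 hi)) 2
  have hsum : Summable fun i => ‖ρ i * c i‖ ^ 2 := by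
    simp only [Real.norm_eq_abs, sq_abs, mul_pow]
    exact hc.summable.of_nonneg_of_le (fun i => by positivity)
      fun i => mul_le_of_le_one_left (sq_nonneg _) (hρ2 i)
  calc ‖∑' i, ρ i • c i • φ i‖ = √(∑' i, ρ i ^ 2 * c i ^ 2) := by
        simp_rw [smul_smul]
        rw [← Real.sqrt_sq (norm_nonneg _), φ.norm_tsum_smul_sq hsum]
        simp only [Real.norm_eq_abs, sq_abs, mul_pow]
    _ ≤ √((ρ r * ‖Δ₀‖) ^ 2 + ∑' i : {i // r < i}, c i ^ 2) := by
        rw [mul_pow]; exact Real.sqrt_le_sqrt hsplit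
    _ ≤ ρ r * ‖Δ₀‖ + √(∑' i : {i // r < i}, c i ^ 2) :=
        Real.sqrt_sq_add_le (mul_nonneg (hρ0 r) (norm_nonneg _))
          (tsum_nonneg fun i => sq_nonneg _)

/-- Spectral contraction bound: for a Hilbert basis `(φ i)` of a real Hilbert space,
nonincreasing nonnegative eigenvalues `λ i`, and step sizes `0 ≤ η s` with
`η s * λ 0 ≤ 1`, setting `ρ i t = ∏_{s=0}^t (1 - η s * λ i)`, one has
`‖∑' i, ρ i t • ⟪Δ₀, φ i⟫ • φ i‖ ≤ ρ r t * ‖Δ₀‖ + √(∑'_{i > r} ⟪Δ₀, φ i⟫²)`. -/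
theorem contraction_eigen_bound {E : Type*} [NormedAddCommGroup E] [InnerProductSpace ℝ E]
    [CompleteSpace E] (φ : HilbertBasis ℕ ℝ E)
    (lam : ℕ → ℝ) (hmono : Antitone lam) (hnonneg : ∀ i, 0 ≤ lam i)
    (η : ℕ → ℝ) (hη0 : ∀ s, 0 ≤ η s) (hη1 : ∀ s, η s * lam 0 ≤ 1)
    (Δ₀ : E) (t r : ℕ) :
    ‖∑' i : ℕ, (∏ s ∈ Finset.range (t + 1), (1 - η s * lam i)) • (⟪Δ₀, φ i⟫ • φ i)‖ ≤
      (∏ s ∈ Finset.range (t + 1), (1 - η s * lam r)) * ‖Δ₀‖ +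
        Real.sqrt (∑' i : {i : ℕ // r < i}, ⟪Δ₀, φ (i : ℕ)⟫ ^ 2) :=
  contraction_eigen_bound_general φ lam hmono hnonneg η hη0 hη1 Δ₀ t r
end

section
/- Let m, d ≥ 1 and let W, W₀ : Fin m → ℝ^d. Then for all x, y ∈ ℝ^d with ‖x‖ ≤ 1 and ‖y‖ ≤ 1, |H_W(x, y) − H_{W₀}(x, y)| ≤ (S_{W,W₀}(x) + S_{W,W₀}(y)) / m. -/
open RealInnerProductSpace

/-- The empirical kernel of a two-layer ReLU network:
`H_W(x, y) = ⟪x, y⟫ * (1/m) * ∑ i, 1{⟪W i, x⟫ ≥ 0} * 1{⟪W i, y⟫ ≥ 0}`. -/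
noncomputable def empKernel (m d : ℕ) (W : Fin m → EuclideanSpace ℝ (Fin d))
    (x y : EuclideanSpace ℝ (Fin d)) : ℝ :=
  ⟪x, y⟫ * ((1 : ℝ) / m) *
    ∑ i, (if 0 ≤ ⟪W i, x⟫ then (1 : ℝ) else 0) * (if 0 ≤ ⟪W i, y⟫ then (1 : ℝ) else 0)

open Classical in
/-- The number of neurons whose activation sign at `x` differs between the
weights `W` and the weights `W₀`. -/
noncomputable def signFlips (m d : ℕ) (W W₀ : Fin m → EuclideanSpace ℝ (Fin d))
    (x : EuclideanSpace ℝ (Fin d)) : ℕ :=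
  (Finset.univ.filter fun i : Fin m => ¬((0 ≤ ⟪W i, x⟫) ↔ (0 ≤ ⟪W₀ i, x⟫))).card

/-- The empirical kernels of two weight configurations differ by at most the
total fraction of sign flips at the two inputs. -/
theorem empKernel_diff_le (m d : ℕ) (hm : 1 ≤ m) (hd : 1 ≤ d)
    (W W₀ : Fin m → EuclideanSpace ℝ (Fin d))
    (x y : EuclideanSpace ℝ (Fin d)) (hx : ‖x‖ ≤ 1) (hy : ‖y‖ ≤ 1) :
    |empKernel m d W x y - empKernel m d W₀ x y| ≤
      ((signFlips m d W W₀ x : ℝ) + (signFlips m d W W₀ y : ℝ)) / m := by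
  set a : Fin m → ℝ := fun i => if 0 ≤ ⟪W i, x⟫ then (1 : ℝ) else 0 with ha
  set b : Fin m → ℝ := fun i => if 0 ≤ ⟪W i, y⟫ then (1 : ℝ) else 0 with hb
  set a' : Fin m → ℝ := fun i => if 0 ≤ ⟪W₀ i, x⟫ then (1 : ℝ) else 0 with ha'
  set b' : Fin m → ℝ := fun i => if 0 ≤ ⟪W₀ i, y⟫ then (1 : ℝ) else 0 with hb'
  have hinner : |⟪x, y⟫| ≤ 1 := by
    calc |⟪x, y⟫| ≤ ‖x‖ * ‖y‖ := abs_real_inner_le_norm x y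
    _ ≤ 1 := by nlinarith [norm_nonneg x, norm_nonneg y]
  have hm0 : (0 : ℝ) < m := by exact_mod_cast hm
  have key : |∑ i, a i * b i - ∑ i, a' i * b' i| ≤
      (signFlips m d W W₀ x : ℝ) + (signFlips m d W W₀ y : ℝ) := by
    have h1 : ∀ i : Fin m, |a i * b i - a' i * b' i| ≤
        (if ¬((0 ≤ ⟪W i, x⟫) ↔ (0 ≤ ⟪W₀ i, x⟫)) then (1:ℝ) else 0) +
        (if ¬((0 ≤ ⟪W i, y⟫) ↔ (0 ≤ ⟪W₀ i, y⟫)) then (1:ℝ) else 0) := by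
      intro i
      simp only [ha, hb, ha', hb']
      split_ifs <;> norm_num <;> tauto
    calc |∑ i, a i * b i - ∑ i, a' i * b' i|
        = |∑ i, (a i * b i - a' i * b' i)| := by rw [Finset.sum_sub_distrib]
      _ ≤ ∑ i, |a i * b i - a' i * b' i| := Finset.abs_sum_le_sum_abs _ _
      _ ≤ ∑ i : Fin m, ((if ¬((0 ≤ ⟪W i, x⟫) ↔ (0 ≤ ⟪W₀ i, x⟫)) then (1:ℝ) else 0) +
            (if ¬((0 ≤ ⟪W i, y⟫) ↔ (0 ≤ ⟪W₀ i, y⟫)) then (1:ℝ) else 0)) :=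
          Finset.sum_le_sum fun i _ => h1 i
      _ = (signFlips m d W W₀ x : ℝ) + (signFlips m d W W₀ y : ℝ) := by
          rw [Finset.sum_add_distrib, signFlips, signFlips]
          push_cast
          rw [Finset.card_filter, Finset.card_filter]
          push_cast
          rfl
  have expand : empKernel m d W x y - empKernel m d W₀ x y =
      ⟪x, y⟫ * ((1:ℝ)/m) * (∑ i, a i * b i - ∑ i, a' i * b' i) := by
    simp only [empKernel, ha, hb, ha', hb']; ring
  rw [expand, abs_mul, abs_mul]
  have h1m : |(1:ℝ)/m| = 1/m := abs_of_pos (by positivity)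
  rw [h1m]
  calc |⟪x, y⟫| * (1/m) * |∑ i, a i * b i - ∑ i, a' i * b' i|
      ≤ 1 * (1/m) * ((signFlips m d W W₀ x : ℝ) + (signFlips m d W W₀ y : ℝ)) := by
        apply mul_le_mul
        · exact mul_le_mul_of_nonneg_right hinner (by positivity)
        · exact key
        · exact abs_nonneg _
        · positivity
    _ = ((signFlips m d W W₀ x : ℝ) + (signFlips m d W W₀ y : ℝ)) / m := by ring
end

section
/- Let (Ω, 𝓕, P) be a probability space with a filtration (F_t)_{t ∈ ℕ}, F_t ⊆ 𝓕, and let H be a separable real Hilbert space. Let v : ℕ → Ω → H be such that each v_t is strongly F_t-measurable and square integrable, with E[v_t | F_{t−1}] = 0 almost surely for every t ≥ 1. Let Q : ℕ → Ω → (H →L[ℝ] H) be such that for every t ≥ 1, Q_t is strongly F_{t−1}-measurable and ‖Q_t(ω)‖ ≤ 1 for all ω. Define q_0 := v_0 and q_{t+1}(ω) := v_{t+1}(ω) + Q_{t+1}(ω)(q_t(ω)). Then for every t ∈ ℕ, E[‖q_t‖²] ≤ Σ_{r=0}^{t} E[‖v_r‖²]. -/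
/-!
Since `Q (t+1) (q t)` is `ℱ t`-measurable and `E[v (t+1) | ℱ t] = 0`, the pull-out property of
conditional expectation kills the cross term `E⟪v (t+1), Q (t+1) (q t)⟫`. Hence
`E‖q (t+1)‖² = E‖v (t+1)‖² + E‖Q (t+1) (q t)‖² ≤ E‖v (t+1)‖² + E‖q t‖²`, and the bound follows
by induction on `t`.
-/

open MeasureTheory

local notation "⟪" x ", " y "⟫" => @inner ℝ _ _ x y

namespace MeasureTheory

variable {Ω : Type*} {m m0 : MeasurableSpace Ω} {μ : Measure Ω}

section ClmApply

variable {𝕜 E F : Type*} [NontriviallyNormedField 𝕜] [NormedAddCommGroup E] [NormedSpace 𝕜 E]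
  [NormedAddCommGroup F] [NormedSpace 𝕜 F] {A : Ω → E →L[𝕜] F} {x : Ω → E}

theorem StronglyMeasurable.clm_apply
    (hA : StronglyMeasurable[m] A) (hx : StronglyMeasurable[m] x) :
    StronglyMeasurable[m] fun ω ↦ A ω (x ω) :=
  isBoundedBilinearMap_apply.continuous.comp_stronglyMeasurable (hA.prodMk hx)

theorem MemLp.clm_apply_of_norm_le {p : ENNReal} {C : ℝ}
    (hA : AEStronglyMeasurable A μ) (hAC : ∀ ω, ‖A ω‖ ≤ C) (hx : MemLp x p μ) :
    MemLp (fun ω ↦ A ω (x ω)) p μ :=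
  (ContinuousLinearMap.id 𝕜 (E →L[𝕜] F)).memLp_of_bilin p
    (memLp_top_of_bound hA C (.of_forall hAC)) hx

end ClmApply

variable {H : Type*} [NormedAddCommGroup H] [InnerProductSpace ℝ H]

theorem integral_inner_eq_zero_of_condExp_eq_zero [CompleteSpace H] (hm : m ≤ m0)
    [SigmaFinite (μ.trim hm)] {f g : Ω → H} (hf : Integrable f μ)
    (hg : AEStronglyMeasurable[m] g μ) (hfg : Integrable (fun ω ↦ ⟪f ω, g ω⟫) μ)
    (hf0 : μ[f|m] =ᵐ[μ] 0) :
    ∫ ω, ⟪f ω, g ω⟫ ∂μ = 0 := by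
  rw [← integral_condExp hm]
  refine integral_eq_zero_of_ae ?_
  filter_upwards [condExp_bilin_of_aestronglyMeasurable_right (innerSL ℝ) hg hfg hf, hf0]
    with ω hω hω0
  exact hω.trans (by simp [hω0])

theorem MemLp.integrable_inner {f g : Ω → H} (hf : MemLp f 2 μ) (hg : MemLp g 2 μ) :
    Integrable (fun ω ↦ ⟪f ω, g ω⟫) μ :=
  memLp_one_iff_integrable.1 <| (innerSL ℝ).memLp_of_bilin 1 hf hg

theorem integral_norm_add_sq_eq_of_integral_inner_eq_zero {f g : Ω → H}
    (hf : MemLp f 2 μ) (hg : MemLp g 2 μ) (hfg : ∫ ω, ⟪f ω, g ω⟫ ∂μ = 0) :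
    ∫ ω, ‖f ω + g ω‖ ^ 2 ∂μ = ∫ ω, ‖f ω‖ ^ 2 ∂μ + ∫ ω, ‖g ω‖ ^ 2 ∂μ := by
  have hf2 := hf.integrable_norm_pow two_ne_zero
  have hg2 := hg.integrable_norm_pow two_ne_zero
  have hfg' := (hf.integrable_inner hg).const_mul 2
  have hf2fg : Integrable (fun ω ↦ ‖f ω‖ ^ 2 + 2 * ⟪f ω, g ω⟫) μ := hf2.add hfg'
  simp_rw [norm_add_sq_real]
  rw [integral_add hf2fg hg2, integral_add hf2 hfg', integral_const_mul, hfg, mul_zero,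
    add_zero]

theorem integral_norm_add_clm_apply_sq_le [CompleteSpace H] [IsFiniteMeasure μ] (hm : m ≤ m0)
    {v x : Ω → H} {A : Ω → H →L[ℝ] H} (hv : MemLp v 2 μ) (hv0 : μ[v|m] =ᵐ[μ] 0)
    (hA : StronglyMeasurable[m] A) (hA1 : ∀ ω, ‖A ω‖ ≤ 1)
    (hxm : StronglyMeasurable[m] x) (hx : MemLp x 2 μ) :
    ∫ ω, ‖v ω + A ω (x ω)‖ ^ 2 ∂μ ≤ ∫ ω, ‖v ω‖ ^ 2 ∂μ + ∫ ω, ‖x ω‖ ^ 2 ∂μ := by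
  have hAx : MemLp (fun ω ↦ A ω (x ω)) 2 μ :=
    hx.clm_apply_of_norm_le (hA.mono hm).aestronglyMeasurable hA1
  have horth : ∫ ω, ⟪v ω, A ω (x ω)⟫ ∂μ = 0 :=
    integral_inner_eq_zero_of_condExp_eq_zero hm (hv.integrable one_le_two)
      (hA.clm_apply hxm).aestronglyMeasurable (hv.integrable_inner hAx) hv0
  have hAx_le (ω : Ω) : ‖A ω (x ω)‖ ≤ ‖x ω‖ := by
    simpa using (A ω).le_of_opNorm_le (hA1 ω) (x ω)
  rw [integral_norm_add_sq_eq_of_integral_inner_eq_zero hv hAx horth]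
  refine add_le_add_right (integral_mono (hAx.integrable_norm_pow two_ne_zero)
    (hx.integrable_norm_pow two_ne_zero) fun ω ↦ ?_) _
  exact pow_le_pow_left₀ (norm_nonneg _) (hAx_le ω) 2

end MeasureTheory

open MeasureTheory

theorem martingale_noise_accumulation_general
    {Ω : Type*} {m0 : MeasurableSpace Ω} (P : Measure Ω) [IsProbabilityMeasure P]
    (ℱ : Filtration ℕ m0)
    {H : Type*} [NormedAddCommGroup H] [InnerProductSpace ℝ H] [CompleteSpace H]
    (v : ℕ → Ω → H)
    (hv_meas : ∀ t, StronglyMeasurable[ℱ t] (v t))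
    (hv_sq : ∀ t, MemLp (v t) 2 P)
    (hv_mart : ∀ t : ℕ, 1 ≤ t → P[v t|ℱ (t - 1)] =ᵐ[P] 0)
    (Q : ℕ → Ω → (H →L[ℝ] H))
    (hQ_meas : ∀ t : ℕ, 1 ≤ t → StronglyMeasurable[ℱ (t - 1)] (Q t))
    (hQ_norm : ∀ t ω, ‖Q t ω‖ ≤ 1)
    (q : ℕ → Ω → H)
    (hq0 : q 0 = v 0)
    (hq : ∀ t ω, q (t + 1) ω = v (t + 1) ω + Q (t + 1) ω (q t ω)) :
    ∀ t : ℕ, (∫ ω, ‖q t ω‖ ^ 2 ∂P) ≤ ∑ r ∈ Finset.range (t + 1), ∫ ω, ‖v r ω‖ ^ 2 ∂P := by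
  have hv_mart' (t : ℕ) : P[v (t + 1)|ℱ t] =ᵐ[P] 0 := by simpa using hv_mart (t + 1) t.succ_pos
  have hQ_pred (t : ℕ) : StronglyMeasurable[ℱ t] (Q (t + 1)) := by
    simpa using hQ_meas (t + 1) t.succ_pos
  have hq_succ (t : ℕ) : q (t + 1) = fun ω ↦ v (t + 1) ω + Q (t + 1) ω (q t ω) := funext (hq t)
  have hq_adapted (t : ℕ) : StronglyMeasurable[ℱ t] (q t) := by
    induction t with
    | zero => exact hq0 ▸ hv_meas 0
    | succ t ih =>
      rw [hq_succ]
      exact (hv_meas _).add (((hQ_pred t).clm_apply ih).mono (ℱ.mono t.le_succ))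
  have hq_memLp (t : ℕ) : MemLp (q t) 2 P := by
    induction t with
    | zero => exact hq0 ▸ hv_sq 0
    | succ t ih =>
      rw [hq_succ]
      exact (hv_sq _).add
        (ih.clm_apply_of_norm_le ((hQ_pred t).mono (ℱ.le t)).aestronglyMeasurable (hQ_norm _))
  intro t
  induction t with
  | zero => simp [hq0]
  | succ t ih =>
    calc ∫ ω, ‖q (t + 1) ω‖ ^ 2 ∂P
        ≤ ∫ ω, ‖v (t + 1) ω‖ ^ 2 ∂P + ∫ ω, ‖q t ω‖ ^ 2 ∂P := by
          rw [hq_succ]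
          exact integral_norm_add_clm_apply_sq_le (ℱ.le t) (hv_sq _) (hv_mart' t) (hQ_pred t)
            (hQ_norm _) (hq_adapted t) (hq_memLp t)
      _ ≤ ∑ r ∈ Finset.range (t + 2), ∫ ω, ‖v r ω‖ ^ 2 ∂P := by
          rw [Finset.sum_range_succ]
          linarith

/-- Accumulation bound for martingale-difference noise composed with adapted
contraction operators: if `q 0 = v 0` and `q (t+1) = v (t+1) + Q (t+1) (q t)`,
then `E[‖q t‖²] ≤ ∑_{r=0}^t E[‖v r‖²]`. -/
theorem martingale_noise_accumulation
    {Ω : Type*} {m0 : MeasurableSpace Ω} (P : Measure Ω) [IsProbabilityMeasure P]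
    (ℱ : Filtration ℕ m0)
    {H : Type*} [NormedAddCommGroup H] [InnerProductSpace ℝ H] [CompleteSpace H]
    [SecondCountableTopology H]
    (v : ℕ → Ω → H)
    (hv_meas : ∀ t, StronglyMeasurable[ℱ t] (v t))
    (hv_sq : ∀ t, MemLp (v t) 2 P)
    (hv_mart : ∀ t : ℕ, 1 ≤ t → P[v t|ℱ (t - 1)] =ᵐ[P] 0)
    (Q : ℕ → Ω → (H →L[ℝ] H))
    (hQ_meas : ∀ t : ℕ, 1 ≤ t → StronglyMeasurable[ℱ (t - 1)] (Q t))
    (hQ_norm : ∀ t ω, ‖Q t ω‖ ≤ 1)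
    (q : ℕ → Ω → H)
    (hq0 : q 0 = v 0)
    (hq : ∀ t ω, q (t + 1) ω = v (t + 1) ω + Q (t + 1) ω (q t ω)) :
    ∀ t : ℕ, (∫ ω, ‖q t ω‖ ^ 2 ∂P) ≤ ∑ r ∈ Finset.range (t + 1), ∫ ω, ‖v r ω‖ ^ 2 ∂P :=
  martingale_noise_accumulation_general P ℱ v hv_meas hv_sq hv_mart Q hQ_meas hQ_norm q hq0 hq
end

section
/- Let d ≥ 1 and let w_1, …, w_{d+1} ∈ ℝ^d be arbitrary. Then there exists a sign pattern b : Fin (d+1) → Bool such that no x ∈ ℝ^d satisfies: for every i, ⟨w_i, x⟩ ≥ 0 if and only if b_i = true. Consequently the class of homogeneous halfspace indicator functions 𝒢 = { w ↦ 1{⟨w, x⟩ ≥ 0} : x ∈ ℝ^d } cannot shatter any set of d+1 points, i.e. VC(𝒢) < d + 1. -/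
open RealInnerProductSpace

lemma halfspaces_aux (d n : ℕ) (w : Fin n → EuclideanSpace ℝ (Fin d))
    (c : Fin n → ℝ) (hc : ∑ i, c i • w i = 0) (i0 : Fin n) (h0 : 0 < c i0) :
    ∃ b : Fin n → Bool, ¬∃ x : EuclideanSpace ℝ (Fin d),
      ∀ i, (0 ≤ ⟪w i, x⟫) ↔ b i = true := by
  refine ⟨fun i => decide (c i ≤ 0), ?_⟩
  rintro ⟨x, hx⟩
  have hS : ∑ i, c i * ⟪w i, x⟫ = 0 := by
    have h1 : ⟪∑ i, c i • w i, x⟫ = (0 : ℝ) := by rw [hc, inner_zero_left]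
    rw [sum_inner] at h1
    simp only [real_inner_smul_left] at h1
    exact h1
  have hlt : ∑ i, c i * ⟪w i, x⟫ < ∑ _i : Fin n, (0 : ℝ) := by
    apply Finset.sum_lt_sum
    · intro i _
      by_cases h : c i ≤ 0
      · have : 0 ≤ ⟪w i, x⟫ := (hx i).mpr (by simp [h])
        exact mul_nonpos_of_nonpos_of_nonneg h this
      · push_neg at h
        have hneg : ⟪w i, x⟫ < 0 := by
          by_contra hge
          push_neg at hge
          have := (hx i).mp hge
          simp at this
          linarith
        nlinarith
    · refine ⟨i0, Finset.mem_univ _, ?_⟩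
      have hneg : ⟪w i0, x⟫ < 0 := by
        by_contra hge
        push_neg at hge
        have := (hx i0).mp hge
        simp at this
        linarith
      nlinarith
  simp only [Finset.sum_const_zero] at hlt
  linarith

/-- Homogeneous halfspace indicators cannot shatter any `d + 1` points in `ℝ^d`:
some sign pattern on `w 0, …, w d` is realized by no `x`, so the VC dimension is
less than `d + 1`. -/
theorem halfspaces_not_shatter (d : ℕ) (hd : 1 ≤ d)
    (w : Fin (d + 1) → EuclideanSpace ℝ (Fin d)) :
    ∃ b : Fin (d + 1) → Bool, ¬∃ x : EuclideanSpace ℝ (Fin d),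
      ∀ i, (0 ≤ ⟪w i, x⟫) ↔ b i = true := by
  have hnli : ¬ LinearIndependent ℝ w := by
    intro h
    have := h.fintype_card_le_finrank
    simp [finrank_euclideanSpace_fin] at this
  rw [Fintype.not_linearIndependent_iff] at hnli
  obtain ⟨g, hg, i0, hi0⟩ := hnli
  rcases lt_or_gt_of_ne hi0 with h | h
  · have : ∑ i, (-g) i • w i = 0 := by
      simp only [Pi.neg_apply, neg_smul, Finset.sum_neg_distrib, hg, neg_zero]
    exact halfspaces_aux d (d + 1) w (-g) this i0 (by simpa using h)
  · exact halfspaces_aux d (d + 1) w g hg i0 h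
end
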